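/- Let F_q ⊆ F_{q²} be the quadratic field extension with q = 2^m, and let ξ: F_q → F_{q²}/F_q be an isomorphism of F_q-vector spaces (via a choice of coset representative). For i ∈ F_{q²}, let b* ∈ F_q be the element with ξ(b*) = [i]. Then for every b ∈ F_q, the sets { b·i + j : j ∈ F_{q²}, [j] = ξ(b²) } and { (b*−b)·i + j : j ∈ F_{q²}, [j] = ξ((b*−b)²) } are equal. -/

import Mathlib

/-!
Modulo `F`, the element `c • i + j` with `[j] = ξ(c²)` has class `c • ξ(b*) + ξ(c²) = ξ(c b* + c²)`,
so each set is the full preimage of `ξ(c b* + c²)` for `c = b` resp. `c = b* - b`. In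
characteristic two the quadratic `c ↦ c b* + c²` is invariant under `c ↦ b* - c`.
-/

theorem Submodule.setOf_exists_mk_eq_add {R M : Type*} [Ring R] [AddCommGroup M] [Module R M]
    (N : Submodule R M) (a : M) (y : M ⧸ N) :
    {x : M | ∃ j : M, Submodule.Quotient.mk j = y ∧ x = a + j} =
      {x : M | Submodule.Quotient.mk x = Submodule.Quotient.mk a + y} := by
  ext x
  constructor
  · rintro ⟨j, rfl, rfl⟩
    exact Submodule.Quotient.mk_add N
  · intro hx
    refine ⟨x - a, ?_, by abel⟩
    rw [Submodule.Quotient.mk_sub, hx, add_sub_cancel_left]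

theorem CharTwo.sub_mul_add_sub_mul_self {R : Type*} [CommRing R] [CharP R 2] (s b : R) :
    (s - b) * s + (s - b) * (s - b) = b * s + b * b := by
  linear_combination (s ^ 2 - 2 * b * s) * CharTwo.two_eq_zero (R := R)

theorem coset_sets_equal (m : ℕ)
    (F K : Type) [Field F] [Field K] [Algebra F K]
    [Fintype F]
    (hF : Fintype.card F = 2 ^ m)
    (ξ : F →ₗ[F] (K ⧸ LinearMap.range (Algebra.linearMap F K)))
    (i : K) (bs : F) (hbs : ξ bs = Submodule.Quotient.mk i) (b : F) :
    {x : K | ∃ j : K, Submodule.Quotient.mk j = ξ (b * b) ∧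
        x = algebraMap F K b * i + j} =
    {x : K | ∃ j : K, Submodule.Quotient.mk j = ξ ((bs - b) * (bs - b)) ∧
        x = algebraMap F K (bs - b) * i + j} := by
  have : CharP F 2 := charP_of_card_eq_prime_pow hF
  have preimage : ∀ c : F,
      {x : K | ∃ j : K, Submodule.Quotient.mk j = ξ (c * c) ∧ x = algebraMap F K c * i + j} =
        {x : K | Submodule.Quotient.mk x = ξ (c * bs + c * c)} := by
    intro c
    simp_rw [← Algebra.smul_def, Submodule.setOf_exists_mk_eq_add, Submodule.Quotient.mk_smul,
      ← hbs, ← map_smul, smul_eq_mul, ← map_add]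
  rw [preimage, preimage, CharTwo.sub_mul_add_sub_mul_self]
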